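/- Let K = Top_w be the class of all well-filtered spaces. For every T0 space X, the space P_H(WF(X)) is well-filtered; consequently Top_w is adequate, and the pair (X^w = P_H(WF(X)), η_X), where η_X(x) = cl{x}, is the well-filtered reflection of X (for every continuous map f : X → Y to a well-filtered space Y there is a unique continuous f* : X^w → Y with f* ∘ η_X = f). -/

import Mathlib

open Set Topology TopologicalSpace

universe u

/-- A subset is saturated if it equals the intersection of the open sets containing it. -/
def IsSaturatedSet {X : Type u} [TopologicalSpace X] (A : Set X) : Prop :=
  A = ⋂₀ {U : Set X | IsOpen U ∧ A ⊆ U}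

/-- A filtered family of nonempty compact saturated subsets of `X`. -/
def IsCptSatFiltered {X : Type u} [TopologicalSpace X] (Ks : Set (Set X)) : Prop :=
  Ks.Nonempty ∧ (∀ K ∈ Ks, K.Nonempty ∧ IsCompact K ∧ IsSaturatedSet K) ∧
    ∀ K₁ ∈ Ks, ∀ K₂ ∈ Ks, ∃ K₃ ∈ Ks, K₃ ⊆ K₁ ∩ K₂

/-- A space is well-filtered if it is `T0` and for every filtered family `Ks` of nonempty
compact saturated subsets and every open `U` with `⋂₀ Ks ⊆ U`, some member of `Ks` is
contained in `U`. -/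
def WellFiltered (X : Type u) [TopologicalSpace X] : Prop :=
  T0Space X ∧ ∀ Ks : Set (Set X), IsCptSatFiltered Ks →
    ∀ U : Set X, IsOpen U → ⋂₀ Ks ⊆ U → ∃ K ∈ Ks, K ⊆ U

/-- `A` has the Rudin property: there is a filtered family `Ks` of nonempty compact
saturated sets such that `closure A` is a minimal closed set meeting every member of `Ks`. -/
def HasRudinProperty {X : Type u} [TopologicalSpace X] (A : Set X) : Prop :=
  ∃ Ks : Set (Set X), IsCptSatFiltered Ks ∧
    (∀ K ∈ Ks, (K ∩ closure A).Nonempty) ∧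
    ∀ C : Set X, IsClosed C → (∀ K ∈ Ks, (K ∩ C).Nonempty) → C ⊆ closure A → C = closure A

structure PH {X : Type u} [TopologicalSpace X] (G : Set (Set X)) : Type u where
  toSet : Set X
  mem : toSet ∈ G

/-- `P_H(G)` carries the lower Vietoris topology, generated by the subbasic open sets
`♦U = {A ∈ G : A ∩ U ≠ ∅}` for `U` open in `X`. -/
instance {X : Type u} [TopologicalSpace X] (G : Set (Set X)) : TopologicalSpace (PH G) :=
  TopologicalSpace.generateFrom
    {V : Set (PH G) | ∃ U : Set X, IsOpen U ∧ V = {A : PH G | (A.toSet ∩ U).Nonempty}}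


/-- `WF(X)`: the nonempty closed sets `A ⊆ X` such that for every continuous map
`f : X → Y` to a well-filtered space `Y` there is a unique `y` with
`closure (f '' A) = closure {y}`. -/
def WFSets (X : Type u) [TopologicalSpace X] : Set (Set X) :=
  {A : Set X | IsClosed A ∧ A.Nonempty ∧
    ∀ (Y : Type u) [TopologicalSpace Y], WellFiltered Y →
      ∀ f : X → Y, Continuous f → ∃! y : Y, closure (f '' A) = closure ({y} : Set Y)}

/-! ### Auxiliary lemmas -/

section Basic
variable {Z : Type u} [TopologicalSpace Z]

lemma closure_image_closure' {W : Type*} [TopologicalSpace W] {f : Z → W} (hf : Continuous f)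
    (s : Set Z) : closure (f '' closure s) = closure (f '' s) :=
  subset_antisymm
    (closure_minimal (image_closure_subset_closure_image hf) isClosed_closure)
    (closure_mono (image_mono subset_closure))

lemma eq_of_closure_singleton_eq {Y : Type*} [TopologicalSpace Y] (hY : T0Space Y) {y y' : Y}
    (h : closure ({y} : Set Y) = closure ({y'} : Set Y)) : y = y' := by
  haveI := hY
  have h1 : y ⤳ y' := specializes_iff_mem_closure.2 (h ▸ subset_closure rfl)
  have h2 : y' ⤳ y := specializes_iff_mem_closure.2 (h.symm ▸ subset_closure rfl)
  exact (h1.antisymm h2).eq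

lemma mem_closure_singleton_of_mem_open {y z : Z} (hz : z ∈ closure ({y} : Set Z))
    {U : Set Z} (hU : IsOpen U) (hzU : z ∈ U) : y ∈ U := by
  rcases mem_closure_iff.1 hz U hU hzU with ⟨w, hw1, hw2⟩
  rwa [← hw2]

/-- finite intersections of opens meeting an irreducible set meet it -/
lemma irr_inter_finite {A : Set Z} (hA : IsIrreducible A) {F : Set (Set Z)} (hF : F.Finite)
    (hopen : ∀ U ∈ F, IsOpen U) (hmeet : ∀ U ∈ F, (A ∩ U).Nonempty) :
    (A ∩ ⋂₀ F).Nonempty := by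
  have := (isIrreducible_iff_sInter.1 hA) hF.toFinset
    (by simpa [hF.coe_toFinset] using hopen) (by simpa [hF.coe_toFinset] using hmeet)
  simpa [hF.coe_toFinset] using this

/-- saturation -/
def satur (S : Set Z) : Set Z := ⋂₀ {V : Set Z | IsOpen V ∧ S ⊆ V}

lemma subset_satur (S : Set Z) : S ⊆ satur S := fun x hx => by
  intro V hV; exact hV.2 hx

lemma satur_subset_open {S V : Set Z} (hV : IsOpen V) (hSV : S ⊆ V) : satur S ⊆ V :=
  fun _ hx => hx V ⟨hV, hSV⟩

lemma satur_mono {S T : Set Z} (h : S ⊆ T) : satur S ⊆ satur T := by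
  intro x hx V hV
  exact hx V ⟨hV.1, h.trans hV.2⟩

lemma isSaturated_satur (S : Set Z) : IsSaturatedSet (satur S) := by
  apply subset_antisymm
  · intro x hx V hV; exact hV.2 hx
  · intro x hx
    intro V hV
    exact hx V ⟨hV.1, satur_subset_open hV.1 hV.2⟩

lemma isCompact_satur {S : Set Z} (hS : IsCompact S) : IsCompact (satur S) := by
  apply isCompact_of_finite_subcover
  intro ι U hU hcov
  rcases hS.elim_finite_subcover U hU ((subset_satur S).trans hcov) with ⟨t, ht⟩
  exact ⟨t, satur_subset_open (isOpen_biUnion fun i _ => hU i) ht⟩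

lemma mem_satur_of_mem_closure {K : Set Z} (hK : IsSaturatedSet K) {z k : Z}
    (hk : k ∈ K) (hzk : k ∈ closure ({z} : Set Z)) : z ∈ K := by
  rw [hK]
  intro V hV
  exact mem_closure_singleton_of_mem_open hzk hV.1 (hV.2 hk)

/-- finite T0 spaces are well-filtered -/
lemma finite_t0_wellFiltered {Y : Type u} [TopologicalSpace Y] [Finite Y] [T0Space Y] :
    WellFiltered Y := by
  refine ⟨inferInstance, ?_⟩
  intro Ks hKs U hU hsub
  have hfin : Ks.Finite := Set.Finite.subset (Set.finite_univ) (subset_univ _)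
  obtain ⟨K₀, hK₀, hmin⟩ : ∃ K₀ ∈ Ks, ∀ K ∈ Ks, id K ≤ id K₀ → id K₀ = id K := by
    obtain ⟨K₀, hK₀, hmin⟩ := Set.Finite.exists_minimalFor id Ks hfin hKs.1
    exact ⟨K₀, hK₀, fun K hK h => le_antisymm (hmin hK h) h⟩
  refine ⟨K₀, hK₀, ?_⟩
  have hK₀min : ∀ K ∈ Ks, K₀ ⊆ K := by
    intro K hK
    rcases hKs.2.2 K₀ hK₀ K hK with ⟨K₃, hK₃, hsub₃⟩
    have : K₃ ⊆ K₀ := hsub₃.trans inter_subset_left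
    have := hmin K₃ hK₃ this
    simp only [id] at this
    rw [this]
    exact hsub₃.trans inter_subset_right
  refine subset_trans ?_ hsub
  intro x hx K hK
  exact hK₀min K hK hx

end Basic
section PHBasic
variable {Z : Type u} [TopologicalSpace Z] {G : Set (Set Z)}

lemma PH.ext' {A B : PH G} (h : A.toSet = B.toSet) : A = B := by
  cases A; cases B; cases h; rfl

lemma isOpen_diamond {U : Set Z} (hU : IsOpen U) :
    IsOpen {A : PH G | (A.toSet ∩ U).Nonempty} :=
  TopologicalSpace.GenerateOpen.basic _ ⟨U, hU, rfl⟩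

lemma PH_basis :
    IsTopologicalBasis ((fun f : Set (Set (PH G)) => ⋂₀ f) ''
      {F : Set (Set (PH G)) | F.Finite ∧
        F ⊆ {V : Set (PH G) | ∃ U : Set Z, IsOpen U ∧ V = {A : PH G | (A.toSet ∩ U).Nonempty}}}) :=
  isTopologicalBasis_of_subbasis rfl

/-- `closure {𝔞}` in `PH G` when `𝔞.toSet` is closed. -/
lemma closure_singleton_PH {𝔞 : PH G} (hcl : IsClosed 𝔞.toSet) :
    closure ({𝔞} : Set (PH G)) = {B : PH G | B.toSet ⊆ 𝔞.toSet} := by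
  apply subset_antisymm
  · apply closure_minimal
    · intro B hB; cases hB; exact Set.Subset.rfl
    · rw [← isOpen_compl_iff]
      have : {B : PH G | B.toSet ⊆ 𝔞.toSet}ᶜ = {B : PH G | (B.toSet ∩ 𝔞.toSetᶜ).Nonempty} := by
        ext B
        simp [Set.not_subset, Set.inter_nonempty, Set.mem_compl_iff]
      rw [this]
      exact isOpen_diamond hcl.isOpen_compl
  · intro B hB
    rw [mem_closure_iff]
    intro o ho hBo
    rcases PH_basis.exists_subset_of_mem_open hBo ho with ⟨v, ⟨F, ⟨hFfin, hFsub⟩, rfl⟩, hBv, hvo⟩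
    refine ⟨𝔞, hvo ?_, rfl⟩
    intro t ht
    rcases hFsub ht with ⟨U, hU, rfl⟩
    have hBU : (B.toSet ∩ U).Nonempty := hBv _ ht
    exact hBU.mono (inter_subset_inter_left _ hB)

/-- T0 for PH G when all members of G are closed sets -/
lemma t0_PH (hG : ∀ A ∈ G, IsClosed A) : T0Space (PH G) := by
  refine ⟨fun {A B} h => ?_⟩
  apply PH.ext'
  by_contra hne
  have key : ∀ C D : PH G, ¬ C.toSet ⊆ D.toSet → (Inseparable C D → False) := by
    intro C D hCD hins
    rcases Set.not_subset.1 hCD with ⟨x, hxC, hxD⟩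
    have hopen : IsOpen {E : PH G | (E.toSet ∩ D.toSetᶜ).Nonempty} :=
      isOpen_diamond (hG D.toSet D.mem).isOpen_compl
    have hC : C ∈ {E : PH G | (E.toSet ∩ D.toSetᶜ).Nonempty} := ⟨x, hxC, hxD⟩
    have hD : D ∉ {E : PH G | (E.toSet ∩ D.toSetᶜ).Nonempty} := by
      rintro ⟨y, hy1, hy2⟩; exact hy2 hy1
    exact hD ((hins.mem_open_iff hopen).1 hC)
  rcases (not_and_or.1 fun hab => hne (subset_antisymm hab.1 hab.2)) with h1 | h1
  · exact absurd h (by intro hins; exact key A B (by simpa using h1) hins)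
  · exact absurd h (by intro hins; exact key B A (by simpa using h1) hins.symm)

end PHBasic

section Irred
variable {Z : Type u} [TopologicalSpace Z]

/-- every member of WFSets is irreducible -/
lemma WFSets.irreducible {A : Set Z} (hA : A ∈ WFSets Z) : IsIrreducible A := by
  refine ⟨hA.2.1, ?_⟩
  intro u v hu hv hAu hAv
  by_contra hempty
  rw [Set.not_nonempty_iff_eq_empty] at hempty
  -- map to the finite T0 space ULift (Prop × Prop)
  set Y : Type u := ULift.{u} (Prop × Prop) with hY
  haveI : T0Space Y := inferInstance
  haveI : Finite Y := inferInstance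
  have hwf : WellFiltered Y := finite_t0_wellFiltered
  set f : Z → Y := fun z => ⟨(z ∈ u, z ∈ v)⟩ with hf
  have hfc : Continuous f := by
    apply continuous_uliftUp.comp
    apply Continuous.prodMk
    · simpa [continuous_Prop] using hu
    · simpa [continuous_Prop] using hv
  rcases (hA.2.2 Y hwf f hfc).exists with ⟨y, hy⟩
  -- the two open subsets of Y
  have hW1 : IsOpen {p : Y | p.down.1} := by
    have : Continuous (fun p : Y => p.down.1) := (continuous_fst.comp continuous_uliftDown)
    simpa [continuous_Prop] using this
  have hW2 : IsOpen {p : Y | p.down.2} := by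
    have : Continuous (fun p : Y => p.down.2) := (continuous_snd.comp continuous_uliftDown)
    simpa [continuous_Prop] using this
  rcases hAu with ⟨a, haA, hau⟩
  rcases hAv with ⟨b, hbA, hbv⟩
  have hfa : f a ∈ closure ({y} : Set Y) := hy ▸ subset_closure ⟨a, haA, rfl⟩
  have hfb : f b ∈ closure ({y} : Set Y) := hy ▸ subset_closure ⟨b, hbA, rfl⟩
  have hy1 : y.down.1 := mem_closure_singleton_of_mem_open hfa hW1 hau
  have hy2 : y.down.2 := mem_closure_singleton_of_mem_open hfb hW2 hbv
  have hyin : y ∈ closure (f '' A) := hy ▸ subset_closure rfl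
  rcases mem_closure_iff.1 hyin ({p : Y | p.down.1} ∩ {p : Y | p.down.2})
      (hW1.inter hW2) ⟨hy1, hy2⟩ with ⟨p, ⟨hp1, hp2⟩, ⟨c, hcA, hcp⟩⟩
  rw [← hcp] at hp1 hp2
  exact absurd hempty (Set.nonempty_iff_ne_empty.1 ⟨c, hcA, hp1, hp2⟩)

end Irred
section Extension
variable {X : Type u} [TopologicalSpace X]

/-- the canonical extension of `f : X → Y` to `PH (WFSets X)` -/
lemma exists_extension {Y : Type u} [TopologicalSpace Y] (hY : WellFiltered Y)
    (f : X → Y) (hf : Continuous f) :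
    ∃ g : PH (WFSets X) → Y, Continuous g ∧
      ∀ A : PH (WFSets X), closure (f '' A.toSet) = closure ({g A} : Set Y) := by
  have hg : ∀ A : PH (WFSets X), ∃ y : Y, closure (f '' A.toSet) = closure ({y} : Set Y) :=
    fun A => (A.mem.2.2 Y hY f hf).exists
  refine ⟨fun A => (hg A).choose, ?_, fun A => (hg A).choose_spec⟩
  rw [continuous_def]
  intro V hV
  have heq : (fun A => (hg A).choose) ⁻¹' V
      = {A : PH (WFSets X) | (A.toSet ∩ f ⁻¹' V).Nonempty} := by
    ext A
    set y := (hg A).choose with hy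
    have hspec : closure (f '' A.toSet) = closure ({y} : Set Y) := (hg A).choose_spec
    simp only [Set.mem_preimage, Set.mem_setOf_eq]
    constructor
    · intro hyV
      have hycl : y ∈ closure (f '' A.toSet) := hspec ▸ subset_closure rfl
      rcases mem_closure_iff.1 hycl V hV hyV with ⟨p, hpV, a, haA, hap⟩
      exact ⟨a, haA, by rwa [← hap] at hpV⟩
    · rintro ⟨a, haA, haV⟩
      have hfa : f a ∈ closure ({y} : Set Y) := hspec ▸ subset_closure ⟨a, haA, rfl⟩
      exact mem_closure_singleton_of_mem_open hfa hV haV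
  rw [heq]
  exact isOpen_diamond (hV.preimage hf)

lemma eta_continuous (η : X → PH (WFSets X))
    (hη : ∀ x : X, (η x).toSet = closure ({x} : Set X)) : Continuous η := by
  apply continuous_generateFrom_iff.2
  rintro s ⟨U, hU, rfl⟩
  have : η ⁻¹' {A : PH (WFSets X) | (A.toSet ∩ U).Nonempty} = U := by
    ext x
    simp only [Set.mem_preimage, Set.mem_setOf_eq, hη]
    constructor
    · rintro ⟨z, hz1, hz2⟩
      exact mem_closure_singleton_of_mem_open hz1 hU hz2
    · intro hx
      exact ⟨x, subset_closure rfl, hx⟩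
  rw [this]; exact hU

lemma closure_singleton_mem_WFSets [T0Space X] (x : X) : closure ({x} : Set X) ∈ WFSets X := by
  refine ⟨isClosed_closure, ⟨x, subset_closure rfl⟩, ?_⟩
  intro Y _ hY f hf
  refine ⟨f x, ?_, ?_⟩
  · rw [closure_image_closure' hf, Set.image_singleton]
  · intro y hy
    rw [closure_image_closure' hf, Set.image_singleton] at hy
    exact eq_of_closure_singleton_eq hY.1 hy.symm

end Extension
section Rudin
variable {Z : Type u} [TopologicalSpace Z]

/-- Rudin's lemma style statement: a minimal closed set meeting every member of a filtered
family of nonempty compact saturated sets is well-filtered determined. -/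
lemma rudin_mem_WFSets {C : Set Z} (hC : IsClosed C) {Ks : Set (Set Z)}
    (hKs : IsCptSatFiltered Ks) (hmeet : ∀ K ∈ Ks, (K ∩ C).Nonempty)
    (hmin : ∀ C', IsClosed C' → C' ⊆ C → (∀ K ∈ Ks, (K ∩ C').Nonempty) → C' = C) :
    C ∈ WFSets Z := by
  obtain ⟨K₀, hK₀⟩ := hKs.1
  obtain ⟨c₀, _, hc₀⟩ := hmeet K₀ hK₀
  refine ⟨hC, ⟨c₀, hc₀⟩, ?_⟩
  intro Y _ hY f hf
  set Q : Set Z → Set Y := fun K => satur (f '' (K ∩ C)) with hQ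
  set F : Set (Set Y) := Q '' Ks with hFdef
  have hQne : ∀ K ∈ Ks, (Q K).Nonempty := by
    intro K hK
    obtain ⟨k, hk⟩ := hmeet K hK
    exact ⟨f k, subset_satur _ ⟨k, hk, rfl⟩⟩
  have hF : IsCptSatFiltered F := by
    refine ⟨⟨Q K₀, ⟨K₀, hK₀, rfl⟩⟩, ?_, ?_⟩
    · rintro _ ⟨K, hK, rfl⟩
      refine ⟨hQne K hK, ?_, isSaturated_satur _⟩
      exact isCompact_satur (((hKs.2.1 K hK).2.1.inter_right hC).image hf)
    · rintro _ ⟨K₁, hK₁, rfl⟩ _ ⟨K₂, hK₂, rfl⟩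
      obtain ⟨K₃, hK₃, hsub₃⟩ := hKs.2.2 K₁ hK₁ K₂ hK₂
      refine ⟨Q K₃, ⟨K₃, hK₃, rfl⟩, subset_inter ?_ ?_⟩
      · exact satur_mono (image_mono (inter_subset_inter_left _ (hsub₃.trans inter_subset_left)))
      · exact satur_mono (image_mono (inter_subset_inter_left _ (hsub₃.trans inter_subset_right)))
  -- find y in the intersection of F and the closure of f '' C
  have hne : (⋂₀ F ∩ closure (f '' C)).Nonempty := by
    by_contra hcon
    rw [Set.not_nonempty_iff_eq_empty, ← Set.disjoint_iff_inter_eq_empty] at hcon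
    have hcon2 : ⋂₀ F ⊆ (closure (f '' C))ᶜ := Set.disjoint_left.1 hcon
    obtain ⟨_, ⟨K, hK, rfl⟩, hQsub⟩ :=
      hY.2 F hF (closure (f '' C))ᶜ isClosed_closure.isOpen_compl hcon2
    obtain ⟨k, hk⟩ := hmeet K hK
    have h1 : f k ∈ Q K := subset_satur _ ⟨k, hk, rfl⟩
    have h2 : f k ∈ closure (f '' C) := subset_closure ⟨k, hk.2, rfl⟩
    exact hQsub h1 h2
  obtain ⟨y, hy1, hy2⟩ := hne
  -- the minimal set C is contained in f ⁻¹' closure {y}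
  have hD : C ∩ f ⁻¹' (closure ({y} : Set Y)) = C := by
    apply hmin _ (hC.inter (isClosed_closure.preimage hf)) inter_subset_left
    intro K hK
    by_contra hemp
    rw [Set.not_nonempty_iff_eq_empty] at hemp
    have hsub' : f '' (K ∩ C) ⊆ (closure ({y} : Set Y))ᶜ := by
      rintro _ ⟨x, hx, rfl⟩
      intro hfx
      have : x ∈ K ∩ (C ∩ f ⁻¹' (closure ({y} : Set Y))) := ⟨hx.1, hx.2, hfx⟩
      rw [hemp] at this
      exact this
    have : Q K ⊆ (closure ({y} : Set Y))ᶜ :=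
      satur_subset_open isClosed_closure.isOpen_compl hsub'
    exact this (hy1 _ ⟨K, hK, rfl⟩) (subset_closure rfl)
  refine ⟨y, ?_, ?_⟩
  · apply subset_antisymm
    · apply closure_minimal _ isClosed_closure
      rintro _ ⟨x, hx, rfl⟩
      have : x ∈ C ∩ f ⁻¹' (closure ({y} : Set Y)) := hD.symm ▸ hx
      exact this.2
    · exact closure_minimal (Set.singleton_subset_iff.2 hy2) isClosed_closure
  · intro y' hy'
    have h1 : closure (f '' C) = closure ({y} : Set Y) := by
      apply subset_antisymm
      · apply closure_minimal _ isClosed_closure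
        rintro _ ⟨x, hx, rfl⟩
        have : x ∈ C ∩ f ⁻¹' (closure ({y} : Set Y)) := hD.symm ▸ hx
        exact this.2
      · exact closure_minimal (Set.singleton_subset_iff.2 hy2) isClosed_closure
    exact eq_of_closure_singleton_eq hY.1 (hy'.symm.trans h1)

/-- key criterion: if every well-filtered determined set is a point closure,
the space is well-filtered. -/
lemma wellFiltered_of_pointclosures [T0Space Z]
    (h : ∀ A ∈ WFSets Z, ∃ z : Z, A = closure ({z} : Set Z)) : WellFiltered Z := by
  refine ⟨inferInstance, ?_⟩
  intro Ks hKs U hU hsub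
  by_contra hcon
  push_neg at hcon
  set S : Set (Set Z) := {C | IsClosed C ∧ C ⊆ Uᶜ ∧ ∀ K ∈ Ks, (K ∩ C).Nonempty} with hSdef
  have hUc : Uᶜ ∈ S := by
    refine ⟨hU.isClosed_compl, Set.Subset.rfl, ?_⟩
    intro K hK
    obtain ⟨x, hx1, hx2⟩ := Set.not_subset.1 (hcon K hK)
    exact ⟨x, hx1, hx2⟩
  have hchaincond : ∀ c ⊆ S, IsChain (fun x1 x2 => x1 ⊆ x2) c → ∃ lb ∈ S, ∀ s ∈ c, lb ⊆ s := by
    intro c hcS hchain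
    by_cases hc : c.Nonempty
    · obtain ⟨C₀, hC₀⟩ := hc
      refine ⟨⋂₀ c, ⟨isClosed_sInter fun C hC => (hcS hC).1,
        (sInter_subset_of_mem hC₀).trans (hcS hC₀).2.1, ?_⟩,
        fun s hs => sInter_subset_of_mem hs⟩
      intro K hK
      have hKcpt := (hKs.2.1 K hK).2.1
      rw [sInter_eq_iInter]
      apply hKcpt.inter_iInter_nonempty (fun C : c => (C : Set Z))
        (fun C => (hcS C.2).1)
      intro u
      by_cases hu : u.Nonempty
      · -- a finite nonempty subset of a chain has a least element
        obtain ⟨M, hMu, hMmin⟩ : ∃ M ∈ u, ∀ C ∈ u, ¬ C < M := by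
          obtain ⟨M, hMu, hMmin⟩ := Finset.exists_minimal hu
          exact ⟨M, hMu, fun C hC hlt => hlt.not_ge (hMmin hC hlt.le)⟩
        have hleast : ∀ C ∈ u, (M : Set Z) ⊆ (C : Set Z) := by
          intro C hCu
          rcases eq_or_ne C M with rfl | hne
          · exact Set.Subset.rfl
          · rcases hchain.total M.2 C.2 with hle | hle
            · exact hle
            · have : ¬ C < M := hMmin C hCu
              rw [lt_iff_le_not_ge] at this
              push_neg at this
              exact this (by exact hle)
        obtain ⟨k, hk1, hk2⟩ := (hcS M.2).2.2 K hK
        exact ⟨k, hk1, by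
          simp only [Set.mem_iInter]
          intro C hCu
          exact hleast C hCu hk2⟩
      · rw [Finset.not_nonempty_iff_eq_empty] at hu
        subst hu
        simpa using (hKs.2.1 K hK).1
    · rw [Set.not_nonempty_iff_eq_empty] at hc
      subst hc
      exact ⟨Uᶜ, hUc, by simp⟩
  obtain ⟨m, hm⟩ := zorn_superset S hchaincond
  have hmS : m ∈ S := hm.1
  have hmmin : ∀ y ∈ S, y ⊆ m → m ⊆ y := fun y hy hym => hm.2 hy hym
  have hmWF : m ∈ WFSets Z := by
    apply rudin_mem_WFSets hmS.1 hKs hmS.2.2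
    intro C' hC'closed hC'sub hC'meet
    have hC'S : C' ∈ S := ⟨hC'closed, hC'sub.trans hmS.2.1, hC'meet⟩
    exact subset_antisymm hC'sub (hmmin C' hC'S hC'sub)
  obtain ⟨z, hz⟩ := h m hmWF
  have hzm : z ∈ m := hz ▸ subset_closure rfl
  have hzK : z ∈ ⋂₀ Ks := by
    intro K hK
    obtain ⟨k, hk1, hk2⟩ := hmS.2.2 K hK
    rw [hz] at hk2
    exact mem_satur_of_mem_closure (hKs.2.1 K hK).2.2 hk1 hk2
  exact hmS.2.1 hzm (hsub hzK)

end Rudin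
section Star
variable {X : Type u} [TopologicalSpace X]

lemma closure_biUnion_closure {ι : Type*} (s : Set ι) (f : ι → Set X) :
    closure (⋃ i ∈ s, f i) = closure (⋃ i ∈ s, closure (f i)) := by
  apply subset_antisymm
  · exact closure_mono (Set.iUnion₂_mono fun i _ => subset_closure)
  · apply closure_minimal _ isClosed_closure
    exact Set.iUnion₂_subset fun i hi => closure_mono (Set.subset_biUnion_of_mem hi)

lemma star_mem_WFSets {𝒜 : Set (PH (WFSets X))} (h𝒜 : 𝒜 ∈ WFSets (PH (WFSets X))) :
    closure (⋃ B ∈ 𝒜, B.toSet) ∈ WFSets X := by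
  refine ⟨isClosed_closure, ?_, ?_⟩
  · obtain ⟨B, hB⟩ := h𝒜.2.1
    obtain ⟨b, hb⟩ := B.mem.2.1
    exact ⟨b, subset_closure (Set.mem_biUnion hB hb)⟩
  · intro Y _ hY f hf
    obtain ⟨g, hgc, hgspec⟩ := exists_extension hY f hf
    obtain ⟨y, hy⟩ := (h𝒜.2.2 Y hY g hgc).exists
    have key : closure (f '' closure (⋃ B ∈ 𝒜, B.toSet)) = closure (g '' 𝒜) := by
      rw [closure_image_closure' hf, Set.image_iUnion₂, closure_biUnion_closure]
      apply subset_antisymm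
      · apply closure_minimal _ isClosed_closure
        apply Set.iUnion₂_subset
        intro i hi
        rw [hgspec i]
        exact closure_mono (Set.singleton_subset_iff.2 ⟨i, hi, rfl⟩)
      · apply closure_minimal _ isClosed_closure
        rintro _ ⟨i, hi, rfl⟩
        have : g i ∈ closure (f '' i.toSet) := by
          rw [hgspec i]; exact subset_closure rfl
        exact subset_closure (Set.mem_biUnion hi this)
    exact ⟨y, key.trans hy, fun y' hy' =>
      eq_of_closure_singleton_eq hY.1 (hy'.symm.trans (key.trans hy))⟩

lemma WFSets_PH_pointclosure (𝒜 : Set (PH (WFSets X)))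
    (h𝒜 : 𝒜 ∈ WFSets (PH (WFSets X))) :
    ∃ 𝔞 : PH (WFSets X), 𝒜 = closure ({𝔞} : Set (PH (WFSets X))) := by
  refine ⟨⟨closure (⋃ B ∈ 𝒜, B.toSet), star_mem_WFSets h𝒜⟩, ?_⟩
  rw [closure_singleton_PH (show IsClosed (closure (⋃ B ∈ 𝒜, B.toSet)) from isClosed_closure)]
  apply subset_antisymm
  · intro B hB
    exact fun x hx => subset_closure (Set.mem_biUnion hB hx)
  · intro B hB
    simp only [Set.mem_setOf_eq] at hB
    by_contra hBnot
    rcases PH_basis.exists_subset_of_mem_open (show B ∈ 𝒜ᶜ from hBnot)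
        h𝒜.1.isOpen_compl with ⟨v, ⟨F, ⟨hFfin, hFsub⟩, rfl⟩, hBv, hvsub⟩
    have hmeet : ∀ t ∈ F, (𝒜 ∩ t).Nonempty := by
      intro t ht
      obtain ⟨U, hU, rfl⟩ := hFsub ht
      obtain ⟨b, hbB, hbU⟩ := hBv _ ht
      rcases mem_closure_iff.1 (hB hbB) U hU hbU with ⟨p, hpU, hp2⟩
      simp only [Set.mem_iUnion] at hp2
      obtain ⟨C, hC, hpC⟩ := hp2
      exact ⟨C, hC, ⟨p, hpC, hpU⟩⟩
    have hopens : ∀ t ∈ F, IsOpen t := by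
      intro t ht
      obtain ⟨U, hU, rfl⟩ := hFsub ht
      exact isOpen_diamond hU
    obtain ⟨C, hC1, hC2⟩ :=
      irr_inter_finite (WFSets.irreducible h𝒜) hFfin hopens hmeet
    exact hvsub hC2 hC1

end Star

theorem PH_WFSets_wellFiltered_and_is_wf_reflection
    (X : Type u) [TopologicalSpace X] [T0Space X]
    (η : X → PH (WFSets X)) (hη : ∀ x : X, (η x).toSet = closure ({x} : Set X)) :
    WellFiltered (PH (WFSets X)) ∧ Continuous η ∧
      ∀ (Y : Type u) [TopologicalSpace Y], WellFiltered Y → ∀ f : X → Y, Continuous f →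
        ∃! g : PH (WFSets X) → Y, Continuous g ∧ g ∘ η = f := by
  haveI hT0P : T0Space (PH (WFSets X)) := t0_PH (fun A hA => hA.1)
  refine ⟨wellFiltered_of_pointclosures WFSets_PH_pointclosure, eta_continuous η hη, ?_⟩
  intro Y _ hY f hf
  obtain ⟨g, hgc, hgspec⟩ := exists_extension hY f hf
  have hcomp : g ∘ η = f := by
    funext x
    have h1 := hgspec (η x)
    rw [hη x, closure_image_closure' hf, Set.image_singleton] at h1
    exact (eq_of_closure_singleton_eq hY.1 h1).symm
  refine ⟨g, ⟨hgc, hcomp⟩, ?_⟩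
  rintro g' ⟨hg'c, hg'η⟩
  funext 𝔄
  -- for any continuous h with h ∘ η = f : closure {h 𝔄} = closure (f '' 𝔄.toSet)
  have main : ∀ h : PH (WFSets X) → Y, Continuous h → h ∘ η = f →
      closure ({h 𝔄} : Set Y) = closure (f '' 𝔄.toSet) := by
    intro h hhc hhη
    -- step 1 : 𝔄 lies in the closure of η '' 𝔄.toSet
    have step1 : 𝔄 ∈ closure (η '' 𝔄.toSet) := by
      rw [mem_closure_iff]
      intro o ho h𝔄o
      rcases PH_basis.exists_subset_of_mem_open h𝔄o ho with
        ⟨v, ⟨F, ⟨hFfin, hFsub⟩, rfl⟩, h𝔄v, hvsub⟩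
      have hch : ∀ t ∈ F, ∃ U : Set X, IsOpen U ∧
          t = {A : PH (WFSets X) | (A.toSet ∩ U).Nonempty} := hFsub
      choose! u hu1 hu2 using hch
      have hirr := WFSets.irreducible 𝔄.mem
      obtain ⟨x, hx1, hx2⟩ := irr_inter_finite hirr (hFfin.image u)
        (by rintro _ ⟨t, ht, rfl⟩; exact hu1 t ht)
        (by
          rintro _ ⟨t, ht, rfl⟩
          have := h𝔄v t ht
          rw [hu2 t ht] at this
          exact this)
      refine ⟨η x, hvsub ?_, ⟨x, hx1, rfl⟩⟩
      intro t ht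
      rw [hu2 t ht]
      refine ⟨x, ?_, hx2 _ ⟨t, ht, rfl⟩⟩
      rw [hη x]
      exact subset_closure rfl
    -- step 2 : h 𝔄 ∈ closure (f '' 𝔄.toSet)
    have step2 : h 𝔄 ∈ closure (f '' 𝔄.toSet) := by
      have h1 : h 𝔄 ∈ h '' closure (η '' 𝔄.toSet) := ⟨𝔄, step1, rfl⟩
      have h2 := image_closure_subset_closure_image hhc h1
      rwa [← Set.image_comp, hhη] at h2
    -- step 3 : f '' 𝔄.toSet ⊆ closure {h 𝔄}
    have step3 : f '' 𝔄.toSet ⊆ closure ({h 𝔄} : Set Y) := by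
      rintro _ ⟨x, hx, rfl⟩
      have hηx : η x ∈ closure ({𝔄} : Set (PH (WFSets X))) := by
        rw [closure_singleton_PH 𝔄.mem.1, Set.mem_setOf_eq, hη x]
        exact closure_minimal (Set.singleton_subset_iff.2 hx) 𝔄.mem.1
      have h1 : h (η x) ∈ h '' closure ({𝔄} : Set (PH (WFSets X))) := ⟨η x, hηx, rfl⟩
      have h2 := image_closure_subset_closure_image hhc h1
      rw [Set.image_singleton] at h2
      have : h (η x) = f x := congrFun hhη x
      rwa [this] at h2
    exact subset_antisymm
      (closure_minimal (Set.singleton_subset_iff.2 step2) isClosed_closure)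
      (closure_minimal step3 isClosed_closure)
  exact eq_of_closure_singleton_eq hY.1
    ((main g' hg'c hg'η).trans ((main g hgc hcomp).symm))
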